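/- There exists a constant c > 0 such that for all sufficiently large real x, there exists a positive integer m < √x having at least c·√x/(log x)² representations m = q + r + 1 with q < r both primes not exceeding √x/3; consequently, there are at least c·√x/(log x)² composite integers n ≤ x (namely the products n = qr) with s(n) = m. -/

import Mathlib

set_option maxHeartbeats 1000000

open Nat Finset

private lemma cb_le' (n : ℕ) (hn : 0 < n) :
    centralBinom n ≤ (2 * n) ^ ((2 * n).primeCounting) := by
  have h1 : centralBinom n = ∏ p ∈ (2 * n + 1).primesBelow, p ^ (centralBinom n).factorization p := by
    conv_lhs => rw [← prod_pow_factorization_centralBinom n]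
    refine (Finset.prod_subset (fun p hp => Finset.mem_range.mpr (Nat.lt_of_mem_primesBelow hp)) ?_).symm
    intro p hp hnp
    have hnpr : ¬ p.Prime := fun h => hnp (Nat.mem_primesBelow.mpr ⟨Finset.mem_range.mp hp, h⟩)
    rw [Nat.factorization_eq_zero_of_not_prime _ hnpr, pow_zero]
  rw [h1]
  calc ∏ p ∈ (2 * n + 1).primesBelow, p ^ (centralBinom n).factorization p
      ≤ ∏ _p ∈ (2 * n + 1).primesBelow, (2 * n) := by
        refine Finset.prod_le_prod' fun p _ => ?_
        rw [centralBinom]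
        exact Nat.pow_factorization_choose_le (by omega)
    _ = (2 * n) ^ (2 * n + 1).primesBelow.card := by rw [Finset.prod_const]
    _ = (2 * n) ^ ((2 * n).primeCounting) := by
        rw [Nat.primesBelow_card_eq_primeCounting', Nat.primeCounting]

private lemma four_pow_lt' (n : ℕ) (hn : 4 ≤ n) :
    4 ^ n < (2 * n) ^ ((2 * n).primeCounting + 1) := by
  calc 4 ^ n < n * centralBinom n := Nat.four_pow_lt_mul_centralBinom n hn
    _ ≤ (2 * n) * (2 * n) ^ ((2 * n).primeCounting) :=
        Nat.mul_le_mul (by omega) (cb_le' n (by omega))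
    _ = (2 * n) ^ ((2 * n).primeCounting + 1) := by ring

private lemma pi_real' (N : ℕ) (hN : 225 ≤ N) :
    (N : ℝ) / (2 * Real.log N) ≤ N.primeCounting := by
  set n := N / 2 with hn
  have h4 : 4 ≤ n := by omega
  have h2n : 2 * n ≤ N := by omega
  have hNle : N ≤ 2 * n + 1 := by omega
  have hmono : (2 * n).primeCounting ≤ N.primeCounting :=
    Nat.monotone_primeCounting h2n
  have hlogN : (0:ℝ) < Real.log N := by
    apply Real.log_pos; exact_mod_cast by omega
  have hkey : (n : ℝ) * Real.log 4 < ((2 * n).primeCounting + 1) * Real.log (2 * n) := by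
    have := four_pow_lt' n h4
    have hR : ((4:ℝ)) ^ n < ((2 * n : ℕ) : ℝ) ^ ((2 * n).primeCounting + 1) := by
      exact_mod_cast this
    have h1 : Real.log ((4:ℝ) ^ n) < Real.log (((2 * n : ℕ) : ℝ) ^ ((2 * n).primeCounting + 1)) :=
      Real.log_lt_log (by positivity) hR
    rw [Real.log_pow, Real.log_pow] at h1
    push_cast at h1 ⊢
    convert h1 using 2
  have hlog2n : Real.log (2 * (n:ℝ)) ≤ Real.log N := by
    apply Real.log_le_log (by positivity)
    exact_mod_cast h2n
  have hlog2npos : (0:ℝ) < Real.log (2*(n:ℝ)) := by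
    apply Real.log_pos
    have : (8:ℝ) ≤ (n:ℝ) := by exact_mod_cast (by omega : 8 ≤ n)
    linarith
  have hl4 : Real.log 4 = 2 * Real.log 2 := by
    rw [show (4:ℝ) = 2 ^ 2 by norm_num, Real.log_pow]; push_cast; ring
  have hl2 : (0.6931471803 : ℝ) < Real.log 2 := Real.log_two_gt_d9
  have hstep : ((N.primeCounting : ℝ) + 1) * Real.log N ≥ (n : ℝ) * Real.log 4 := by
    calc ((N.primeCounting : ℝ) + 1) * Real.log N
        ≥ (((2*n).primeCounting : ℝ) + 1) * Real.log (2*(n:ℝ)) := by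
          apply mul_le_mul (by exact_mod_cast by omega) hlog2n (le_of_lt hlog2npos) (by positivity)
      _ ≥ (n : ℝ) * Real.log 4 := le_of_lt hkey
  have hs : Real.sqrt N ^ 2 = (N:ℝ) := Real.sq_sqrt (by positivity)
  have hs15 : (15:ℝ) ≤ Real.sqrt N := by
    rw [show (15:ℝ) = Real.sqrt 225 by
      rw [show (225:ℝ) = 15 ^ 2 by norm_num, Real.sqrt_sq (by norm_num)]]
    exact Real.sqrt_le_sqrt (by exact_mod_cast hN)
  have hlogle : Real.log N ≤ 2 * (Real.sqrt N - 1) := by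
    have h := Real.log_le_sub_one_of_pos (x := Real.sqrt N) (by positivity)
    have : Real.log N = 2 * Real.log (Real.sqrt N) := by
      rw [Real.log_sqrt (by positivity)]; ring
    linarith
  have hn' : ((N:ℝ) - 1) / 2 ≤ (n : ℝ) := by
    have : (N:ℝ) ≤ 2 * n + 1 := by exact_mod_cast hNle
    linarith
  rw [div_le_iff₀ (by positivity)]
  have hmain : ((N:ℝ) - 1) * Real.log 2 - Real.log N ≥ (N:ℝ) / 2 := by
    nlinarith [hs, hs15, hlogle, hl2, sq_nonneg (Real.sqrt N - 15)]
  have h4pos : (0:ℝ) < Real.log 4 := by rw [hl4]; linarith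
  nlinarith [hstep, hn', hl4, hlogN, hl2]

private lemma pair_mul_inj' {q r q' r' : ℕ} (hq : q.Prime) (hr : r.Prime)
    (hq' : q'.Prime) (hr' : r'.Prime) (h1 : q < r) (h2 : q' < r')
    (h : q * r = q' * r') : q = q' ∧ r = r' := by
  have hd : q' ∣ q * r := h ▸ Dvd.intro r' rfl
  rcases (Nat.Prime.dvd_mul hq').mp hd with hc | hc
  · have hqq : q' = q := ((Nat.prime_dvd_prime_iff_eq hq' hq).mp hc)
    subst hqq
    have : r = r' := Nat.eq_of_mul_eq_mul_left hq'.pos h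
    exact ⟨rfl, this.symm ▸ rfl⟩
  · have hqr : q' = r := (Nat.prime_dvd_prime_iff_eq hq' hr).mp hc
    -- then q ∣ q' * r'
    have hd2 : q ∣ q' * r' := h ▸ Dvd.intro r rfl
    rcases (Nat.Prime.dvd_mul hq).mp hd2 with hc2 | hc2
    · have : q = q' := (Nat.prime_dvd_prime_iff_eq hq hq').mp hc2
      omega
    · have : q = r' := (Nat.prime_dvd_prime_iff_eq hq hr').mp hc2
      omega

private lemma sigma_prime' {p : ℕ} (hp : p.Prime) :
    ArithmeticFunction.sigma 1 p = 1 + p := by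
  rw [ArithmeticFunction.sigma_one_apply, Nat.Prime.divisors hp,
    Finset.sum_pair hp.one_lt.ne]

private lemma s_qr' {q r : ℕ} (hq : q.Prime) (hr : r.Prime) (hne : q ≠ r) :
    ArithmeticFunction.sigma 1 (q * r) - q * r = q + r + 1 := by
  have hcop : Nat.Coprime q r := (Nat.coprime_primes hq hr).mpr hne
  have hσ : ArithmeticFunction.sigma 1 (q * r) = (1 + q) * (1 + r) := by
    rw [ArithmeticFunction.isMultiplicative_sigma.map_mul_of_coprime hcop,
      sigma_prime' hq, sigma_prime' hr]
  rw [hσ, show (1 + q) * (1 + r) = q * r + (q + r + 1) by ring,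
    Nat.add_sub_cancel_left]

theorem popular_s_value_from_prime_pairs :
    ∃ c : ℝ, 0 < c ∧ ∃ X₀ : ℝ, ∀ x : ℝ, X₀ ≤ x → ∃ m : ℕ,
      0 < m ∧ (m : ℝ) < Real.sqrt x ∧
      c * Real.sqrt x / Real.log x ^ 2 ≤
        ({qr : ℕ × ℕ | qr.1.Prime ∧ qr.2.Prime ∧ qr.1 < qr.2 ∧
          (qr.1 : ℝ) ≤ Real.sqrt x / 3 ∧ (qr.2 : ℝ) ≤ Real.sqrt x / 3 ∧
          qr.1 + qr.2 + 1 = m}.ncard : ℝ) ∧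
      c * Real.sqrt x / Real.log x ^ 2 ≤
        ({n : ℕ | 1 < n ∧ ¬ n.Prime ∧ (n : ℝ) ≤ x ∧
          ArithmeticFunction.sigma 1 n - n = m}.ncard : ℝ) := by
  refine ⟨1/128, by norm_num, ?_⟩
  -- eventually conditions
  have hlo : (fun x : ℝ => Real.log x) =o[Filter.atTop] fun x => x ^ (1/4 : ℝ) :=
    isLittleO_log_rpow_atTop (by norm_num)
  have hev : ∀ᶠ x : ℝ in Filter.atTop,
      900 ≤ Real.sqrt x ∧ 128 * Real.log x ^ 2 ≤ Real.sqrt x := by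
    filter_upwards [hlo.def (by norm_num : (0:ℝ) < 1/12),
      Filter.eventually_ge_atTop (810000 : ℝ)] with x hx hx9
    have hx0 : (0:ℝ) ≤ x := by linarith
    have hx1 : (1:ℝ) ≤ x := by linarith
    constructor
    · rw [show (900:ℝ) = Real.sqrt 810000 by
        rw [show (810000:ℝ) = 900 ^ 2 by norm_num, Real.sqrt_sq (by norm_num)]]
      exact Real.sqrt_le_sqrt hx9
    · have h14 : (0:ℝ) ≤ x ^ (1/4 : ℝ) := Real.rpow_nonneg hx0 _
      have hlog : Real.log x ≤ (1/12) * x ^ (1/4 : ℝ) := by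
        have := hx
        rw [Real.norm_eq_abs, Real.norm_eq_abs, abs_of_nonneg h14] at this
        exact (le_abs_self _).trans this
      have hlog0 : (0:ℝ) ≤ Real.log x := Real.log_nonneg hx1
      have hsq : (x ^ (1/4 : ℝ)) ^ 2 = Real.sqrt x := by
        rw [← Real.rpow_natCast (x ^ (1/4 : ℝ)) 2, ← Real.rpow_mul hx0,
          Real.sqrt_eq_rpow]
        norm_num
      nlinarith [sq_nonneg (Real.log x), sq_nonneg (x ^ (1/4:ℝ))]
  obtain ⟨X₀, hX₀⟩ := Filter.eventually_atTop.mp hev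
  refine ⟨X₀, fun x hx => ?_⟩
  obtain ⟨h900, h128⟩ := hX₀ x hx
  set s := Real.sqrt x with hsdef
  have hx0 : (0:ℝ) ≤ x := le_of_lt (Real.sqrt_pos.mp (by rw [← hsdef]; linarith))
  have hsx : s ^ 2 = x := Real.sq_sqrt hx0
  have hxbig : (810000:ℝ) ≤ x := by nlinarith
  set L := Real.log x with hLdef
  have hL1 : 1 ≤ L := by
    rw [hLdef, show (1:ℝ) = Real.log (Real.exp 1) by rw [Real.log_exp]]
    apply Real.log_le_log (Real.exp_pos 1)
    have := Real.exp_one_lt_d9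
    linarith
  have hLpos : 0 < L := by linarith
  -- the floor
  set N := ⌊s / 3⌋₊ with hNdef
  have hN_le : (N:ℝ) ≤ s / 3 := Nat.floor_le (by positivity)
  have hN_ge : s / 3 - 1 ≤ (N:ℝ) := by
    have := Nat.lt_floor_add_one (s/3)
    linarith
  have hN4 : s / 4 ≤ (N:ℝ) := by linarith
  have hN225 : 225 ≤ N := by
    have : (225:ℝ) ≤ (N:ℝ) := by linarith
    exact_mod_cast this
  set P := (N+1).primesBelow with hPdef
  set k := P.card with hkdef
  have hk_pi : k = N.primeCounting := by
    rw [hkdef, hPdef, Nat.primesBelow_card_eq_primeCounting', Nat.primeCounting]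
  have hcheb : (N:ℝ) / (2 * Real.log N) ≤ (k:ℝ) := by
    rw [hk_pi]; exact pi_real' N hN225
  have hNpos : (0:ℝ) < N := by positivity
  have hlogNpos : 0 < Real.log N := by
    apply Real.log_pos; exact_mod_cast by omega
  have hlogN_le : Real.log N ≤ L / 2 := by
    have h1 : (N:ℝ) ≤ s := by linarith
    have h2 : Real.log N ≤ Real.log s := Real.log_le_log hNpos h1
    rw [hsdef, Real.log_sqrt hx0] at h2
    exact h2
  have hk_lb : s / (4 * L) ≤ (k:ℝ) := by
    refine le_trans ?_ hcheb
    rw [div_le_div_iff₀ (by positivity) (by positivity)]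
    nlinarith [hlogNpos, hN4, h900]
  have hk2 : (2:ℝ) ≤ (k:ℝ) := by
    have h8L : 8 * L ≤ s := by nlinarith
    have : (2:ℝ) ≤ s / (4*L) := by
      rw [le_div_iff₀ (by positivity)]; linarith
    linarith
  -- pairs
  set S := (P ×ˢ P).filter (fun qr => qr.1 < qr.2) with hSdef
  have hKlb : (k:ℝ)^2 - k ≤ 2 * S.card := by
    have hsub : P.offDiag ⊆ S ∪ S.image Prod.swap := by
      intro qr hqr
      rw [Finset.mem_offDiag] at hqr
      obtain ⟨h1, h2, h3⟩ := hqr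
      rcases lt_or_gt_of_ne h3 with hlt | hgt
      · exact Finset.mem_union_left _ (Finset.mem_filter.mpr
          ⟨Finset.mem_product.mpr ⟨h1, h2⟩, hlt⟩)
      · refine Finset.mem_union_right _ (Finset.mem_image.mpr
          ⟨qr.swap, Finset.mem_filter.mpr ⟨Finset.mem_product.mpr ⟨h2, h1⟩, hgt⟩, ?_⟩)
        simp
    have hcard : P.offDiag.card ≤ 2 * S.card := by
      calc P.offDiag.card ≤ (S ∪ S.image Prod.swap).card := Finset.card_le_card hsub
        _ ≤ S.card + (S.image Prod.swap).card := Finset.card_union_le _ _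
        _ ≤ S.card + S.card := by
            have := Finset.card_image_le (s := S) (f := Prod.swap)
            omega
        _ = 2 * S.card := by ring
    have hod : P.offDiag.card = k * k - k := by rw [hkdef]; exact Finset.offDiag_card _
    have hkk : k ≤ k * k := Nat.le_mul_of_pos_left k (by
      have : (0:ℝ) < k := by linarith
      exact_mod_cast this)
    have : ((k * k - k : ℕ) : ℝ) ≤ 2 * S.card := by
      rw [← hod]; exact_mod_cast hcard
    rw [Nat.cast_sub hkk] at this
    push_cast at this ⊢
    nlinarith [this]
  have hK : x / (64 * L^2) ≤ (S.card : ℝ) := by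
    have hkq : (k:ℝ)^2 / 2 ≤ (k:ℝ)^2 - k := by nlinarith
    have h1 : (s / (4*L))^2 ≤ (k:ℝ)^2 := by
      have h0 : (0:ℝ) ≤ s / (4*L) := by positivity
      nlinarith
    have : x / (16 * L^2) ≤ (k:ℝ)^2 := by
      have heq : (s/(4*L))^2 = x / (16 * L^2) := by
        field_simp
        nlinarith [hsx]
      linarith [heq ▸ h1]
    have h4 : x / (16 * L^2) = 4 * (x / (64 * L^2)) := by ring
    linarith
  -- pigeonhole
  set d := 2 * N + 2 with hddef
  set n₀ := S.card / d with hn₀def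
  have hmaps : ∀ a ∈ S, a.1 + a.2 + 1 ∈ Finset.range d := by
    intro a ha
    rw [hSdef, Finset.mem_filter, Finset.mem_product] at ha
    have h1 := Nat.lt_of_mem_primesBelow ha.1.1
    have h2 := Nat.lt_of_mem_primesBelow ha.1.2
    rw [Finset.mem_range]
    omega
  obtain ⟨m, hmr, hfib⟩ := Finset.exists_le_card_fiber_of_mul_le_card_of_maps_to hmaps
    ⟨0, Finset.mem_range.mpr (by omega)⟩
    (by rw [Finset.card_range, mul_comm]; exact Nat.div_mul_le_self S.card d)
  set F := S.filter (fun a => a.1 + a.2 + 1 = m) with hFdef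
  have hd_le : (d:ℝ) ≤ s := by
    rw [hddef]
    push_cast
    linarith [hN_le, h900]
  have hdpos : (0:ℝ) < d := by positivity
  have hn₀ : s / (128 * L^2) ≤ (n₀:ℝ) := by
    have hmod := Nat.div_add_mod S.card d
    have hmodlt : S.card % d < d := Nat.mod_lt _ (by omega)
    have h1n : S.card < d * n₀ + d := by
      conv_lhs => rw [← hmod]
      exact Nat.add_lt_add_left hmodlt _
    have h1 : (S.card : ℝ) < (d:ℝ) * (n₀:ℝ) + (d:ℝ) := by exact_mod_cast h1n
    have hn₀0 : (0:ℝ) ≤ (n₀:ℝ) := by positivity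
    -- s^2/(64 L^2) ≤ S.card < d(n₀+1) ≤ s(n₀+1)
    have h2 : s^2 / (64 * L^2) < s * ((n₀:ℝ) + 1) := by
      rw [hsx]
      calc x / (64 * L^2) ≤ (S.card:ℝ) := hK
        _ < (d:ℝ) * (n₀:ℝ) + (d:ℝ) := h1
        _ ≤ s * ((n₀:ℝ) + 1) := by nlinarith
    rw [div_le_iff₀ (by positivity)]
    rw [div_lt_iff₀ (by positivity)] at h2
    -- s^2 < s(n₀+1) * 64 L^2 ⇒ s < 64L²(n₀+1) ⇒ goal s ≤ n₀ * 128 L²  using s ≥ 128 L²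
    have hs0 : (0:ℝ) < s := by linarith
    have h3 : s < 64 * L^2 * ((n₀:ℝ) + 1) := by nlinarith
    nlinarith
  have hF : s / (128 * L^2) ≤ (F.card : ℝ) := by
    refine le_trans hn₀ ?_
    exact_mod_cast hfib
  have hF1 : 1 ≤ F.card := by
    have : (1:ℝ) ≤ s / (128 * L^2) := by
      rw [le_div_iff₀ (by positivity)]; linarith
    have : (1:ℝ) ≤ (F.card : ℝ) := by linarith
    exact_mod_cast this
  obtain ⟨⟨q0, r0⟩, hq0F⟩ := Finset.card_pos.mp hF1
  have hq0 := Finset.mem_filter.mp hq0F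
  have hm_eq : q0 + r0 + 1 = m := hq0.2
  have hm_pos : 0 < m := by omega
  -- facts about members of F
  have hFmem : ∀ a ∈ F, a.1.Prime ∧ a.2.Prime ∧ a.1 < a.2 ∧ a.1 ≤ N ∧ a.2 ≤ N ∧
      a.1 + a.2 + 1 = m := by
    intro a ha
    rw [hFdef, Finset.mem_filter, hSdef, Finset.mem_filter, Finset.mem_product] at ha
    obtain ⟨⟨⟨hp1, hp2⟩, hlt⟩, hsum⟩ := ha
    exact ⟨Nat.prime_of_mem_primesBelow hp1, Nat.prime_of_mem_primesBelow hp2, hlt,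
      by have := Nat.lt_of_mem_primesBelow hp1; omega,
      by have := Nat.lt_of_mem_primesBelow hp2; omega, hsum⟩
  have hm_lt : (m:ℝ) < s := by
    obtain ⟨_, _, _, hq, hr, hsum⟩ := hFmem _ hq0F
    have : (m:ℝ) ≤ 2 * N + 1 := by
      have : m ≤ 2 * N + 1 := by omega
      exact_mod_cast this
    nlinarith [hN_le, h900]
  refine ⟨m, hm_pos, hm_lt, ?_, ?_⟩
  · -- prime pair set
    set A := {qr : ℕ × ℕ | qr.1.Prime ∧ qr.2.Prime ∧ qr.1 < qr.2 ∧
        (qr.1 : ℝ) ≤ Real.sqrt x / 3 ∧ (qr.2 : ℝ) ≤ Real.sqrt x / 3 ∧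
        qr.1 + qr.2 + 1 = m} with hAdef
    have hsub : (↑F : Set (ℕ × ℕ)) ⊆ A := by
      intro a ha
      obtain ⟨hp1, hp2, hlt, h1, h2, hsum⟩ := hFmem a (Finset.mem_coe.mp ha)
      refine ⟨hp1, hp2, hlt, ?_, ?_, hsum⟩
      · calc (a.1 : ℝ) ≤ N := by exact_mod_cast h1
          _ ≤ s / 3 := hN_le
      · calc (a.2 : ℝ) ≤ N := by exact_mod_cast h2
          _ ≤ s / 3 := hN_le
    have hfinA : A.Finite := by
      apply Set.Finite.subset ((Finset.range (N+1) ×ˢ Finset.range (N+1)).finite_toSet)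
      intro qr hqr
      obtain ⟨_, _, _, h1, h2, _⟩ := hqr
      simp only [Finset.coe_product, Set.mem_prod, Finset.mem_coe, Finset.mem_range]
      constructor
      · have : qr.1 ≤ N := Nat.le_floor (by linarith)
        omega
      · have : qr.2 ≤ N := Nat.le_floor (by linarith)
        omega
    have h1 : (F.card : ℝ) ≤ (A.ncard : ℝ) := by
      have := Set.ncard_le_ncard hsub hfinA
      rw [Set.ncard_coe_finset] at this
      exact_mod_cast this
    calc (1/128 : ℝ) * s / L^2 = s / (128 * L^2) := by ring
      _ ≤ (F.card : ℝ) := hF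
      _ ≤ (A.ncard : ℝ) := h1
  · -- composite set
    set B := {n : ℕ | 1 < n ∧ ¬ n.Prime ∧ (n : ℝ) ≤ x ∧
        ArithmeticFunction.sigma 1 n - n = m} with hBdef
    have hinj : Set.InjOn (fun qr : ℕ × ℕ => qr.1 * qr.2) (↑F : Set (ℕ × ℕ)) := by
      intro a ha b hb hab
      obtain ⟨hp1, hp2, hlt, _, _, _⟩ := hFmem a (Finset.mem_coe.mp ha)
      obtain ⟨hp1', hp2', hlt', _, _, _⟩ := hFmem b (Finset.mem_coe.mp hb)
      obtain ⟨h1, h2⟩ := pair_mul_inj' hp1 hp2 hp1' hp2' hlt hlt' hab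
      exact Prod.ext h1 h2
    have himg : (fun qr : ℕ × ℕ => qr.1 * qr.2) '' (↑F : Set (ℕ × ℕ)) ⊆ B := by
      rintro n ⟨a, ha, rfl⟩
      obtain ⟨hp1, hp2, hlt, h1, h2, hsum⟩ := hFmem a (Finset.mem_coe.mp ha)
      refine ⟨?_, ?_, ?_, ?_⟩
      · calc 1 < 2 * 2 := by norm_num
          _ ≤ a.1 * a.2 := Nat.mul_le_mul hp1.two_le hp2.two_le
      · exact Nat.not_prime_mul hp1.one_lt.ne' hp2.one_lt.ne'
      · have ha1 : (a.1 : ℝ) ≤ s / 3 := by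
          calc (a.1 : ℝ) ≤ N := by exact_mod_cast h1
            _ ≤ s / 3 := hN_le
        have ha2 : (a.2 : ℝ) ≤ s / 3 := by
          calc (a.2 : ℝ) ≤ N := by exact_mod_cast h2
            _ ≤ s / 3 := hN_le
        have h0 : (0:ℝ) ≤ (a.1 : ℝ) := by positivity
        push_cast
        nlinarith [hsx, h900]
      · rw [s_qr' hp1 hp2 hlt.ne]
        exact hsum
    have hfinB : B.Finite := by
      apply Set.Finite.subset (Finset.range (⌊x⌋₊ + 1)).finite_toSet
      intro n hn
      obtain ⟨_, _, hnx, _⟩ := hn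
      simp only [Finset.mem_coe, Finset.mem_range]
      have : n ≤ ⌊x⌋₊ := Nat.le_floor hnx
      omega
    have h1 : (F.card : ℝ) ≤ (B.ncard : ℝ) := by
      have heq : ((fun qr : ℕ × ℕ => qr.1 * qr.2) '' (↑F : Set (ℕ × ℕ))).ncard = F.card := by
        rw [Set.ncard_image_of_injOn hinj, Set.ncard_coe_finset]
      have := Set.ncard_le_ncard himg hfinB
      rw [heq] at this
      exact_mod_cast this
    calc (1/128 : ℝ) * s / L^2 = s / (128 * L^2) := by ring
      _ ≤ (F.card : ℝ) := hF
      _ ≤ (B.ncard : ℝ) := h1
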